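/- Let V be an orthogonal complex vector space and B ∈ 𝔭(V) nilpotent and symmetric with respect to the orthogonal form. Then there exist vectors u₁,...,u_t ∈ V and integers e₁,...,e_t ≥ 0 such that the vectors B^b u_l (0 ≤ b ≤ e_l) form a basis of V, and all pairings among them vanish except (B^b u_l, B^{e_l - b} u_l) = 1. -/

import Mathlib

/-!
Induct on `dim V`. If `B ^ (E + 1) = 0 ≠ B ^ E`, then `(x, y) ↦ Ω x (B ^ E y)` is a nonzero
symmetric form, so some `u` has `Ω u (B ^ E u) ≠ 0`; rescale it to `1`, and then, for
`k = 1, …, E`, replace `u` by `u + c • B ^ k u` to kill `Ω u (B ^ (E - k) u)`. Afterwards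
`Ω (B ^ a u) (B ^ c u) = δ_{a + c, E}`, so the span of `u, B u, …, B ^ E u` is a `B`-stable
nondegenerate subspace of dimension `E + 1`. Its orthogonal complement is again `B`-stable and
nondegenerate, and the induction hypothesis applies to it.
-/

open Module Submodule
open LinearMap (BilinForm IsAdjointPair)

section

variable {K V : Type*} [Field K] [AddCommGroup V] [Module K V]
  {Ω : BilinForm K V} {B : Module.End K V}

namespace LinearMap

lemma IsAdjointPair.pow (hB : IsAdjointPair Ω Ω B B) (n : ℕ) :
    IsAdjointPair Ω Ω ⇑(B ^ n) ⇑(B ^ n) := by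
  induction n with
  | zero => exact isAdjointPair_one
  | succ n ih =>
    have h := ih.mul hB
    rwa [← pow_succ, ← pow_succ'] at h

end LinearMap

namespace LinearMap.BilinForm

section Biorthogonal

variable {ι : Type*} [Fintype ι] [DecidableEq ι] {v w : ι → V}

lemma apply_sum_smul_of_pairing_eq_ite (h : ∀ i j, Ω (v i) (w j) = if i = j then 1 else 0)
    (g : ι → K) (j : ι) : Ω (∑ i, g i • v i) (w j) = g j := by
  simp [h]

lemma linearIndependent_of_pairing_eq_ite (h : ∀ i j, Ω (v i) (w j) = if i = j then 1 else 0) :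
    LinearIndependent K v :=
  Fintype.linearIndependent_iff.mpr fun g hg j => by
    simpa [hg] using (apply_sum_smul_of_pairing_eq_ite h g j).symm

lemma disjoint_span_orthogonal_of_pairing_eq_ite (hΩ : Ω.IsRefl)
    (h : ∀ i j, Ω (v i) (w j) = if i = j then 1 else 0)
    (hw : ∀ j, w j ∈ span K (Set.range v)) :
    Disjoint (span K (Set.range v)) (Ω.orthogonal (span K (Set.range v))) := by
  refine Submodule.disjoint_def.mpr fun x hx hxo => ?_
  obtain ⟨g, rfl⟩ := (mem_span_range_iff_exists_fun K).mp hx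
  have hg : g = 0 := funext fun j => by
    rw [← apply_sum_smul_of_pairing_eq_ite h g j]
    exact hΩ _ _ (hxo _ (hw j))
  simp [hg]

end Biorthogonal

lemma apply_mem_orthogonal_of_isAdjointPair (hB : IsAdjointPair Ω Ω B B) {W : Submodule K V}
    (hW : ∀ x ∈ W, B x ∈ W) : ∀ x ∈ Ω.orthogonal W, B x ∈ Ω.orthogonal W :=
  fun x hx y hy => by
    show Ω y (B x) = 0
    rw [← hB]
    exact hx _ (hW y hy)

lemma nondegenerate_restrict_orthogonal [FiniteDimensional K V] (hΩ : Ω.Nondegenerate)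
    (hr : Ω.IsRefl) {W : Submodule K V} (hW : Disjoint W (Ω.orthogonal W)) :
    (Ω.restrict (Ω.orthogonal W)).Nondegenerate :=
  nondegenerate_restrict_of_disjoint_orthogonal _ hr <| by
    rwa [orthogonal_orthogonal hΩ hr, disjoint_comm]

lemma exists_apply_self_ne_zero [NeZero (2 : K)] (hΩ : Ω.Nondegenerate) (hsymm : Ω.IsSymm)
    {T : Module.End K V} (hT : IsAdjointPair Ω Ω T T) (hT0 : T ≠ 0) :
    ∃ u, Ω u (T u) ≠ 0 := by
  have := invertibleOfNonzero (two_ne_zero : (2 : K) ≠ 0)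
  refine exists_bilinForm_self_ne_zero (B := Ω.compl₂ T) (fun h => hT0 ?_) ⟨fun x y => ?_⟩
  · ext x
    exact hΩ.2 (T x) fun y => by simpa using LinearMap.congr_fun₂ h y x
  · simp only [compl₂_apply, RingHom.id_apply]
    rw [← hT, hsymm.eq]

lemma exists_apply_self_eq_one [IsAlgClosed K] {T : Module.End K V} {u : V}
    (hu : Ω u (T u) ≠ 0) : ∃ u', Ω u' (T u') = 1 := by
  obtain ⟨c, hc⟩ := IsAlgClosed.exists_pow_nat_eq (Ω u (T u))⁻¹ two_pos
  refine ⟨c • u, ?_⟩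
  simp only [map_smul, smul_apply, smul_eq_mul, ← mul_assoc, ← sq, hc, inv_mul_cancel₀ hu]

lemma apply_pow_apply_pow (hB : IsAdjointPair Ω Ω B B) (x y : V) (a c : ℕ) :
    Ω ((B ^ a) x) ((B ^ c) y) = Ω x ((B ^ (a + c)) y) := by
  rw [hB.pow, ← Module.End.mul_apply, ← pow_add]

lemma apply_add_smul_pow_apply (hB : IsAdjointPair Ω Ω B B) (u : V) (c : K) (j k : ℕ) :
    Ω (u + c • (B ^ k) u) ((B ^ j) (u + c • (B ^ k) u)) =
      Ω u ((B ^ j) u) + 2 * c * Ω u ((B ^ (j + k)) u) + c ^ 2 * Ω u ((B ^ (j + 2 * k)) u) := by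
  have h2 : Ω ((B ^ k) u) ((B ^ j) u) = Ω u ((B ^ (j + k)) u) := by
    rw [apply_pow_apply_pow hB, add_comm]
  have h3 : Ω ((B ^ k) u) ((B ^ (j + k)) u) = Ω u ((B ^ (j + 2 * k)) u) := by
    rw [apply_pow_apply_pow hB, two_mul, add_comm k, add_assoc]
  simp only [map_add, map_smul, LinearMap.add_apply, LinearMap.smul_apply, smul_eq_mul,
    ← Module.End.mul_apply, ← pow_add, h2, h3]
  ring

lemma exists_apply_pow_apply_eq_ite [NeZero (2 : K)] (hB : IsAdjointPair Ω Ω B B) {E : ℕ}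
    (hE : B ^ (E + 1) = 0) {u : V} (hu : Ω u ((B ^ E) u) = 1) :
    ∃ u', ∀ j, Ω u' ((B ^ j) u') = if j = E then 1 else 0 := by
  have hhigh : ∀ x j, E < j → Ω x ((B ^ j) x) = 0 := fun x j hj => by
    rw [pow_eq_zero_of_le hj hE, LinearMap.zero_apply, map_zero]
  suffices ∀ d ≤ E, ∃ u', ∀ j, E - d ≤ j →
      Ω u' ((B ^ j) u') = if j = E then 1 else 0 by
    obtain ⟨u', hu'⟩ := this E le_rfl
    exact ⟨u', fun j => hu' j (by omega)⟩
  intro d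
  induction d with
  | zero =>
    refine fun _ => ⟨u, fun j hj => ?_⟩
    rcases (Nat.sub_zero E ▸ hj).eq_or_lt with rfl | hlt
    · rw [if_pos rfl, hu]
    · rw [if_neg hlt.ne', hhigh u j hlt]
  | succ d ih =>
    intro hd
    obtain ⟨u', hu'⟩ := ih (by omega)
    -- for `j ≥ E - (d + 1)`, adding `c • B ^ (d + 1) u'` only changes `Ω u' (B ^ j u')` at
    -- `j = E - (d + 1)`, and there by `2 * c`
    refine ⟨u' + (-Ω u' ((B ^ (E - (d + 1))) u') / 2) • (B ^ (d + 1)) u', fun j hj => ?_⟩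
    rw [apply_add_smul_pow_apply hB, hu' (j + (d + 1)) (by omega),
      hhigh _ (j + 2 * (d + 1)) (by omega)]
    rcases hj.eq_or_lt with rfl | hlt
    · rw [if_pos (show E - (d + 1) + (d + 1) = E by omega),
        if_neg (show E - (d + 1) ≠ E by omega)]
      field_simp
      ring
    · rw [hu' j (by omega), if_neg (show j + (d + 1) ≠ E by omega)]
      ring

end LinearMap.BilinForm

namespace Module.End

def chainSpan (B : Module.End K V) (u : V) (E : ℕ) : Submodule K V :=
  span K (Set.range fun a : Fin (E + 1) => (B ^ (a : ℕ)) u)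

variable {u : V} {E : ℕ}

lemma pow_apply_mem_chainSpan (hE : B ^ (E + 1) = 0) (a : ℕ) : (B ^ a) u ∈ B.chainSpan u E := by
  rcases le_or_gt a E with ha | ha
  · exact subset_span ⟨⟨a, Nat.lt_succ_of_le ha⟩, rfl⟩
  · rw [pow_eq_zero_of_le ha hE, LinearMap.zero_apply]
    exact zero_mem _

lemma apply_mem_chainSpan (hE : B ^ (E + 1) = 0) :
    ∀ x ∈ B.chainSpan u E, B x ∈ B.chainSpan u E := by
  suffices B.chainSpan u E ≤ (B.chainSpan u E).comap B from fun _ hx => this hx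
  refine span_le.mpr ?_
  rintro _ ⟨a, rfl⟩
  rw [SetLike.mem_coe, mem_comap, ← Module.End.mul_apply, ← pow_succ']
  exact pow_apply_mem_chainSpan hE _

lemma pairing_chain_eq_ite (hu : ∀ a c, Ω ((B ^ a) u) ((B ^ c) u) = if a + c = E then 1 else 0)
    (a b : Fin (E + 1)) :
    Ω ((B ^ (a : ℕ)) u) ((B ^ (E - b : ℕ)) u) = if a = b then 1 else 0 := by
  rw [hu]
  congr 1
  simp only [Fin.ext_iff, eq_iff_iff]
  omega

lemma finrank_chainSpan
    (hu : ∀ a c, Ω ((B ^ a) u) ((B ^ c) u) = if a + c = E then 1 else 0) :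
    finrank K (B.chainSpan u E) = E + 1 := by
  rw [chainSpan, finrank_span_eq_card
    (LinearMap.BilinForm.linearIndependent_of_pairing_eq_ite (pairing_chain_eq_ite hu)),
    Fintype.card_fin]

lemma disjoint_chainSpan_orthogonal
    (hu : ∀ a c, Ω ((B ^ a) u) ((B ^ c) u) = if a + c = E then 1 else 0) (hr : Ω.IsRefl)
    (hE : B ^ (E + 1) = 0) :
    Disjoint (B.chainSpan u E) (Ω.orthogonal (B.chainSpan u E)) :=
  LinearMap.BilinForm.disjoint_span_orthogonal_of_pairing_eq_ite hr (pairing_chain_eq_ite hu)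
    fun _ => pow_apply_mem_chainSpan hE _

end Module.End

def AntidiagonalChains (Ω : BilinForm K V) (B : Module.End K V) {t : ℕ} (u : Fin t → V)
    (e : Fin t → ℕ) : Prop :=
  ∀ (l m : Fin t) (a c : ℕ), a ≤ e l → c ≤ e m →
    Ω ((B ^ a) (u l)) ((B ^ c) (u m)) = if l = m ∧ a + c = e l then 1 else 0

namespace AntidiagonalChains

variable {t : ℕ} {u : Fin t → V} {e : Fin t → ℕ}

lemma ne_zero (h : AntidiagonalChains Ω B u e) (l : Fin t) : u l ≠ 0 := by
  intro hl
  have h1 := h l l 0 (e l) (Nat.zero_le _) le_rfl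
  simp [hl] at h1

lemma linearIndependent (h : AntidiagonalChains Ω B u e) :
    LinearIndependent K fun i : Σ l, Fin (e l + 1) => (B ^ (i.2 : ℕ)) (u i.1) := by
  classical
  refine LinearMap.BilinForm.linearIndependent_of_pairing_eq_ite (Ω := Ω)
    (w := fun i => (B ^ (e i.1 - i.2)) (u i.1)) ?_
  rintro ⟨l, a⟩ ⟨m, c⟩
  rw [h l m a (e m - c) (Nat.le_of_lt_succ a.2) (Nat.sub_le _ _)]
  by_cases hlm : l = m
  · subst hlm
    have hc := c.2
    simp only [true_and, Sigma.mk.inj_iff, heq_eq_eq, Fin.ext_iff]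
    congr 1
    simp only [eq_iff_iff]
    omega
  · simp [hlm]

lemma cons (hsymm : Ω.IsSymm) (h : AntidiagonalChains Ω B u e) {u₀ : V} {E : ℕ}
    (hu₀ : ∀ a c, Ω ((B ^ a) u₀) ((B ^ c) u₀) = if a + c = E then 1 else 0)
    (horth : ∀ l a c, Ω ((B ^ a) u₀) ((B ^ c) (u l)) = 0) :
    AntidiagonalChains Ω B (Fin.cons u₀ u) (Fin.cons E e) := by
  intro l m
  induction l using Fin.cases <;> induction m using Fin.cases <;> intro a c ha hc
  · simpa using hu₀ a c
  · simpa [(Fin.succ_ne_zero _).symm] using horth _ a c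
  · simpa [Fin.succ_ne_zero, hsymm.eq] using horth _ c a
  · simpa [Fin.succ_inj] using h _ _ a c ha hc

lemma of_restrict {S : Submodule K V} (hS : ∀ x ∈ S, B x ∈ S) {u : Fin t → S}
    (h : AntidiagonalChains (Ω.restrict S) (B.restrict hS) u e) :
    AntidiagonalChains Ω B (fun l => (u l : V)) e := by
  intro l m a c ha hc
  have := h l m a c ha hc
  rwa [Module.End.pow_restrict, Module.End.pow_restrict] at this

end AntidiagonalChains

open LinearMap.BilinForm Module.End

lemma exists_normalized_chain [NeZero (2 : K)] [IsAlgClosed K] [Nontrivial V]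
    (hΩ : Ω.Nondegenerate) (hsymm : Ω.IsSymm) (hB : IsAdjointPair Ω Ω B B)
    (hnil : IsNilpotent B) :
    ∃ (E : ℕ) (u : V), B ^ (E + 1) = 0 ∧
      ∀ a c, Ω ((B ^ a) u) ((B ^ c) u) = if a + c = E then 1 else 0 := by
  set E := nilpotencyClass B - 1
  have hE : B ^ (E + 1) = 0 := by
    rw [Nat.sub_add_cancel (pos_nilpotencyClass_iff.mpr hnil)]
    exact pow_nilpotencyClass hnil
  obtain ⟨u₁, hu₁⟩ :=
    exists_apply_self_ne_zero hΩ hsymm (hB.pow E) (pow_pred_nilpotencyClass hnil)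
  obtain ⟨u₂, hu₂⟩ := exists_apply_self_eq_one hu₁
  obtain ⟨u, hu⟩ := exists_apply_pow_apply_eq_ite hB hE hu₂
  exact ⟨E, u, hE, fun a c => by rw [apply_pow_apply_pow hB, hu]⟩

theorem exists_antidiagonalChains [NeZero (2 : K)] [IsAlgClosed K] [FiniteDimensional K V]
    (hΩ : Ω.Nondegenerate) (hsymm : Ω.IsSymm) (hB : IsAdjointPair Ω Ω B B)
    (hnil : IsNilpotent B) :
    ∃ (t : ℕ) (u : Fin t → V) (e : Fin t → ℕ),
      ∑ l, (e l + 1) = finrank K V ∧ AntidiagonalChains Ω B u e := by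
  induction hn : finrank K V using Nat.strong_induction_on generalizing V with
  | _ n ih =>
  rcases subsingleton_or_nontrivial V with hV | hV
  · exact ⟨0, Fin.elim0, Fin.elim0, by simp [← hn, finrank_zero_of_subsingleton],
      fun l => l.elim0⟩
  obtain ⟨E, u₀, hE, hu₀⟩ := exists_normalized_chain hΩ hsymm hB hnil
  have hdisj := disjoint_chainSpan_orthogonal hu₀ hsymm.isRefl hE
  have hBW := apply_mem_orthogonal_of_isAdjointPair hB (apply_mem_chainSpan (u := u₀) hE)
  have hW : finrank K (Ω.orthogonal (B.chainSpan u₀ E)) = n - (E + 1) := by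
    rw [finrank_orthogonal hΩ, finrank_chainSpan hu₀, hn]
  have hEn : E + 1 ≤ n := hn ▸ finrank_chainSpan hu₀ ▸ Submodule.finrank_le _
  obtain ⟨t, u, e, hsum, hu⟩ := ih _ (by omega)
    (nondegenerate_restrict_orthogonal hΩ hsymm.isRefl hdisj) (hsymm.restrict _)
    (fun x y => hB x y) (isNilpotent.restrict hBW hnil) rfl
  refine ⟨t + 1, Fin.cons u₀ fun l => u l, Fin.cons E e, ?_,
    (AntidiagonalChains.of_restrict hBW hu).cons hsymm hu₀ fun l a c => ?_⟩
  · rw [Fin.sum_univ_succ]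
    simp only [Fin.cons_zero, Fin.cons_succ]
    omega
  · exact pow_apply_mem_of_forall_mem c hBW _ (u l).2 _ (pow_apply_mem_chainSpan hE a)

end

/-- Let `V` be a complex orthogonal vector space and `B ∈ 𝔭(V)` nilpotent and
symmetric with respect to the orthogonal form. Then there exist vectors `u₁,…,u_t` and
integers `e₁,…,e_t ≥ 0` such that the vectors `B^b u_l` (`0 ≤ b ≤ e_l`) form a basis of `V`
and all pairings among them vanish except `(B^b u_l, B^{e_l−b} u_l) = 1`. -/
theorem nilpotent_symmetric_orthogonal_normal_form
    (V : Type*) [AddCommGroup V] [Module ℂ V] [FiniteDimensional ℂ V]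
    (Ω : LinearMap.BilinForm ℂ V) (hΩ : Ω.Nondegenerate)
    (hsymm : ∀ v w, Ω v w = Ω w v)
    (B : Module.End ℂ V) (hB : ∀ v w, Ω (B v) w = Ω v (B w))
    (hnil : IsNilpotent B) :
    ∃ (t : ℕ) (u : Fin t → V) (e : Fin t → ℕ),
      (∀ l, u l ≠ 0) ∧
      (∃ b : Module.Basis (Σ l : Fin t, Fin (e l + 1)) ℂ V,
        ∀ (l : Fin t) (a : Fin (e l + 1)), b ⟨l, a⟩ = (B ^ (a : ℕ)) (u l)) ∧
      (∀ (l m : Fin t) (a c : ℕ), a ≤ e l → c ≤ e m →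
        Ω ((B ^ a) (u l)) ((B ^ c) (u m)) = if l = m ∧ a + c = e l then 1 else 0) := by
  obtain ⟨t, u, e, hsum, hu⟩ := exists_antidiagonalChains hΩ ⟨hsymm⟩ hB hnil
  have hcard : Fintype.card (Σ l : Fin t, Fin (e l + 1)) = finrank ℂ V := by
    simp [Fintype.card_sigma, hsum]
  exact ⟨t, u, e, hu.ne_zero,
    ⟨basisOfLinearIndependentOfCardEqFinrank' _ hu.linearIndependent hcard, fun _ _ => by simp⟩,
    hu⟩
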